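/- arXiv:2308.11168 — 2 statements merged into one kernel-verified Lean document; each statement's English description precedes it below -/
import Mathlib

section
/- Let {X_i, i ∈ J} be nonnegative integer-valued random variables over a finite index set J, and suppose for each i ∈ J there is a set A_i ⊆ J with i ∈ A_i such that X_i is independent of {X_j : j ∉ A_i}. Let W = Σ_{i∈J} X_i with E[W²] < ∞. Then G₁ := Σ_{i∈J} [ E[X_i] · E[Σ_{j∈A_i} X_j] − E[X_i (Σ_{j∈A_i} X_j − 1)] ] equals E[W] − Var(W) = −Γ₂(W). -/
open MeasureTheory ProbabilityTheory

/-! Writing `W = Σ_j X_j` and splitting `W = S_i + T_i` with `S_i = Σ_{j ∈ A_i} X_j`, bilinearity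
gives `Var W = Σ_i cov(X_i, W) = Σ_i (cov(X_i, S_i) + cov(X_i, T_i))`, and local dependence kills
`cov(X_i, T_i)`. Each summand of `G₁` is `E[X_i] − cov(X_i, S_i)`, so `G₁ = E[W] − Var W`. -/

section

variable {Ω : Type*} [MeasurableSpace Ω] {μ : Measure Ω} {J : Type*} [Fintype J] [DecidableEq J]

lemma ProbabilityTheory.IndepFun.comp_sum_compl {β γ δ : Type*}
    [MeasurableSpace β] [MeasurableSpace γ] [MeasurableSpace δ]
    {Z : Ω → γ} {Y : J → Ω → β} {s : Finset J} {φ : γ → δ} {g : β → ℝ}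
    (hφ : Measurable φ) (hg : Measurable g)
    (h : IndepFun Z (fun ω (j : {j // j ∉ s}) => Y j ω) μ) :
    IndepFun (fun ω => φ (Z ω)) (fun ω => ∑ j ∈ sᶜ, g (Y j ω)) μ := by
  have hsum : Measurable fun v : {j // j ∉ s} → β => ∑ j, g (v j) :=
    Finset.measurable_sum _ fun j _ => hg.comp (measurable_pi_apply j)
  convert h.comp hφ hsum using 1
  · rfl
  ext ω
  exact Finset.sum_subtype _ (fun j => Finset.mem_compl) fun j => g (Y j ω)

lemma variance_sum_eq_sum_covariance_of_indepFun_compl [IsProbabilityMeasure μ]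
    {Y : J → Ω → ℝ} (hY : ∀ i, MemLp (Y i) 2 μ) (A : J → Finset J)
    (hind : ∀ i, IndepFun (Y i) (fun ω => ∑ j ∈ (A i)ᶜ, Y j ω) μ) :
    Var[fun ω => ∑ i, Y i ω; μ] = ∑ i, cov[Y i, fun ω => ∑ j ∈ A i, Y j ω; μ] := by
  have hsum : ∀ s : Finset J, MemLp (fun ω => ∑ j ∈ s, Y j ω) 2 μ := fun s =>
    memLp_finsetSum s fun j _ => hY j
  rw [← covariance_self (hsum _).aestronglyMeasurable.aemeasurable,
    covariance_fun_sum_left hY (hsum _)]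
  refine Finset.sum_congr rfl fun i _ => ?_
  have hsplit : (fun ω => ∑ j, Y j ω)
      = (fun ω => ∑ j ∈ A i, Y j ω) + fun ω => ∑ j ∈ (A i)ᶜ, Y j ω := by
    ext ω
    exact (Finset.sum_add_sum_compl (A i) fun j => Y j ω).symm
  rw [hsplit, covariance_add_right (hY i) (hsum _) (hsum _),
    (hind i).covariance_eq_zero (hY i) (hsum _), add_zero]

lemma integral_mul_integral_sub_integral_mul_sub_one [IsProbabilityMeasure μ] {U V : Ω → ℝ}
    (hU : MemLp U 2 μ) (hV : MemLp V 2 μ) :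
    μ[U] * μ[V] - ∫ ω, U ω * (V ω - 1) ∂μ = μ[U] - cov[U, V; μ] := by
  have hsplit : ∫ ω, U ω * (V ω - 1) ∂μ = μ[U * V] - μ[U] := by
    simp_rw [mul_sub, mul_one]
    exact integral_sub (hU.integrable_mul hV) (hU.integrable one_le_two)
  rw [hsplit, covariance_eq_sub hU hV]
  ring

end

theorem stmt_5_general {Ω : Type*} [MeasurableSpace Ω] (μ : Measure Ω) [IsProbabilityMeasure μ]
    {J : Type*} [Fintype J]
    (X : J → Ω → ℕ)
    (hX2 : ∀ i, MemLp (fun ω => (X i ω : ℝ)) 2 μ)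
    (A : J → Finset J)
    (hLD1 : ∀ i, IndepFun (X i) (fun ω => fun j : {j : J // j ∉ A i} => X j.1 ω) μ) :
    ∑ i : J, ((∫ ω, (X i ω : ℝ) ∂μ) * (∫ ω, ∑ j ∈ A i, (X j ω : ℝ) ∂μ)
        - ∫ ω, (X i ω : ℝ) * ((∑ j ∈ A i, (X j ω : ℝ)) - 1) ∂μ)
      = (∫ ω, ∑ i : J, (X i ω : ℝ) ∂μ) - variance (fun ω => ∑ i : J, (X i ω : ℝ)) μ := by
  classical
  have hvar := variance_sum_eq_sum_covariance_of_indepFun_compl hX2 A fun i =>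
    (hLD1 i).comp_sum_compl measurable_from_nat measurable_from_nat
  rw [integral_finsetSum _ fun i _ => (hX2 i).integrable one_le_two, hvar,
    ← Finset.sum_sub_distrib]
  exact Finset.sum_congr rfl fun i _ =>
    integral_mul_integral_sub_integral_mul_sub_one (hX2 i) (memLp_finsetSum _ fun j _ => hX2 j)

/-- Under local dependence (LD1) (`X i` independent of `{X j : j ∉ A i}`),
`G₁ := Σ_i (E[X_i]·E[Σ_{j∈A_i} X_j] − E[X_i(Σ_{j∈A_i} X_j − 1)])`
equals `E[W] − Var(W) = −Γ₂(W)` for `W = Σ_i X_i`. -/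
theorem stmt_5 {Ω : Type*} [MeasurableSpace Ω] (μ : Measure Ω) [IsProbabilityMeasure μ]
    {J : Type*} [Fintype J] [DecidableEq J]
    (X : J → Ω → ℕ) (hXm : ∀ i, Measurable (X i))
    (hX2 : ∀ i, MemLp (fun ω => (X i ω : ℝ)) 2 μ)
    (A : J → Finset J) (hA : ∀ i, i ∈ A i)
    (hLD1 : ∀ i, IndepFun (X i) (fun ω => fun j : {j : J // j ∉ A i} => X j.1 ω) μ) :
    ∑ i : J, ((∫ ω, (X i ω : ℝ) ∂μ) * (∫ ω, ∑ j ∈ A i, (X j ω : ℝ) ∂μ)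
        - ∫ ω, (X i ω : ℝ) * ((∑ j ∈ A i, (X j ω : ℝ)) - 1) ∂μ)
      = (∫ ω, ∑ i : J, (X i ω : ℝ) ∂μ) - variance (fun ω => ∑ i : J, (X i ω : ℝ)) μ :=
  stmt_5_general μ X hX2 A hLD1
end

section
/- Let {X_i, i∈J} satisfy local dependence (LD1) with W = Σ_{i∈J} X_i and E[W³] < ∞. Then Σ_{i∈J} Σ_{j∈A_i} (E[X_i] E[X_j W] − E[X_i X_j W]) + Σ_{i∈J} Σ_{j,k∈A_i} (½ E[X_i X_j X_k] − ½ E[X_i] E[X_j X_k]) = −½ E[W³] + ½ E[W] E[W²]. -/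
/-!
Split `W = U_i + V_i` with `U_i = ∑_{j ∈ A_i} X_j`. Expanding the products, the `i`-th summand
of the left side differs from `-½ E[X_i W²] + ½ E[X_i] E[W²]` only by
`½ (E[X_i] E[V_i²] - E[X_i V_i²])`, which vanishes because `X_i` is independent of `V_i`.
Summing over `i` then gives `E[W³]` and `E[W] E[W²]`. Finite third moments make every product
of three of the variables integrable, by Hölder's inequality.
-/

open MeasureTheory ProbabilityTheory Finset ENNReal

section ThirdMoments

variable {Ω : Type*} [MeasurableSpace Ω] {μ : Measure Ω} {f g h : Ω → ℝ}

instance : HolderTriple 3 3 (3 / 2) :=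
  ⟨by rw [ENNReal.inv_div (by norm_num) (by norm_num), ← two_mul, div_eq_mul_inv]⟩

instance : HolderTriple (3 / 2) 3 1 :=
  ⟨by rw [ENNReal.inv_div (by norm_num) (by norm_num), inv_one, ← one_div,
    ENNReal.div_add_div_same, show (2 : ℝ≥0∞) + 1 = 3 by norm_num,
    ENNReal.div_self (by norm_num) (by norm_num)]⟩

lemma MeasureTheory.MemLp.integrable_mul_of_three [IsFiniteMeasure μ] (hf : MemLp f 3 μ)
    (hg : MemLp g 3 μ) : Integrable (fun ω => f ω * g ω) μ :=
  memLp_one_iff_integrable.mp ((hg.mul' hf (r := 3 / 2)).mono_exponent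
    (by rw [ENNReal.le_div_iff_mul_le (by norm_num) (by norm_num)]; norm_num))

lemma MeasureTheory.MemLp.integrable_mul_mul_of_three (hf : MemLp f 3 μ) (hg : MemLp g 3 μ)
    (hh : MemLp h 3 μ) : Integrable (fun ω => f ω * g ω * h ω) μ :=
  memLp_one_iff_integrable.mp (hh.mul' (hg.mul' hf (r := 3 / 2)))

end ThirdMoments

section LocalDependence

variable {Ω : Type*} [MeasurableSpace Ω] {μ : Measure Ω}

lemma ProbabilityTheory.IndepFun.integral_mul_sum_sq_eq {κ : Type*} [Fintype κ] {Y : Ω → ℕ}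
    {Z : κ → Ω → ℕ}
    (hYZ : IndepFun Y (fun ω k => Z k ω) μ) (hY : AEStronglyMeasurable (fun ω => (Y ω : ℝ)) μ)
    (hZ : ∀ k, AEStronglyMeasurable (fun ω => (Z k ω : ℝ)) μ) :
    ∫ ω, (Y ω : ℝ) * ((∑ k, (Z k ω : ℝ)) * ∑ k, (Z k ω : ℝ)) ∂μ
      = (∫ ω, (Y ω : ℝ) ∂μ) * ∫ ω, (∑ k, (Z k ω : ℝ)) * ∑ k, (Z k ω : ℝ) ∂μ := by
  have hsum : AEStronglyMeasurable (fun ω => ∑ k, (Z k ω : ℝ)) μ :=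
    Finset.aestronglyMeasurable_fun_sum _ fun k _ => hZ k
  have hsq : Measurable fun z : κ → ℕ => (∑ k, (z k : ℝ)) * ∑ k, (z k : ℝ) := by
    fun_prop
  exact (hYZ.comp measurable_from_nat hsq).integral_fun_mul_eq_mul_integral hY (hsum.mul hsum)

lemma integral_finset_sum_sum {ι : Type*} {s t : Finset ι} {F : ι → ι → Ω → ℝ}
    (hF : ∀ j ∈ s, ∀ k ∈ t, Integrable (F j k) μ) :
    ∫ ω, ∑ j ∈ s, ∑ k ∈ t, F j k ω ∂μ = ∑ j ∈ s, ∑ k ∈ t, ∫ ω, F j k ω ∂μ := by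
  rw [integral_finsetSum s fun j hj => integrable_finsetSum t (hF j hj)]
  exact sum_congr rfl fun j hj => integral_finsetSum t (hF j hj)

variable [IsFiniteMeasure μ] {f u v w : Ω → ℝ}

lemma integral_cubic_identity_of_integral_mul_sq (hf : MemLp f 3 μ) (hu : MemLp u 3 μ)
    (hv : MemLp v 3 μ) (hw : ∀ ω, w ω = u ω + v ω)
    (hfv : ∫ ω, f ω * (v ω * v ω) ∂μ = (∫ ω, f ω ∂μ) * ∫ ω, v ω * v ω ∂μ) :
    (∫ ω, f ω ∂μ) * (∫ ω, u ω * w ω ∂μ) - (∫ ω, f ω * u ω * w ω ∂μ)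
      + ((1 / 2) * (∫ ω, f ω * u ω * u ω ∂μ) - (1 / 2) * (∫ ω, f ω ∂μ) * ∫ ω, u ω * u ω ∂μ)
      = -(1 / 2) * (∫ ω, f ω * w ω * w ω ∂μ) + (1 / 2) * (∫ ω, f ω ∂μ) * ∫ ω, w ω * w ω ∂μ := by
  have huu := hu.integrable_mul_of_three hu
  have huv := hu.integrable_mul_of_three hv
  have hvv := hv.integrable_mul_of_three hv
  have hfuu := hf.integrable_mul_mul_of_three hu hu
  have hfuv := hf.integrable_mul_mul_of_three hu hv
  have hfvv : Integrable (fun ω => f ω * (v ω * v ω)) μ := by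
    simpa only [mul_assoc] using hf.integrable_mul_mul_of_three hv hv
  have huw : ∫ ω, u ω * w ω ∂μ = (∫ ω, u ω * u ω ∂μ) + ∫ ω, u ω * v ω ∂μ := by
    simp_rw [hw, mul_add]; exact integral_add huu huv
  have hfuw :
      ∫ ω, f ω * u ω * w ω ∂μ = (∫ ω, f ω * u ω * u ω ∂μ) + ∫ ω, f ω * u ω * v ω ∂μ := by
    simp_rw [hw, mul_add]; exact integral_add hfuu hfuv
  have hww : ∫ ω, w ω * w ω ∂μ
      = (∫ ω, u ω * u ω ∂μ) + 2 * (∫ ω, u ω * v ω ∂μ) + ∫ ω, v ω * v ω ∂μ := by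
    have : ∀ ω, w ω * w ω = u ω * u ω + 2 * (u ω * v ω) + v ω * v ω := fun ω => by
      rw [hw]; ring
    simp_rw [this]
    rw [integral_add (huu.fun_add (huv.const_mul 2)) hvv, integral_add huu (huv.const_mul 2),
      integral_const_mul]
  have hfww : ∫ ω, f ω * w ω * w ω ∂μ = (∫ ω, f ω * u ω * u ω ∂μ)
      + 2 * (∫ ω, f ω * u ω * v ω ∂μ) + ∫ ω, f ω * (v ω * v ω) ∂μ := by
    have : ∀ ω, f ω * w ω * w ω
        = f ω * u ω * u ω + 2 * (f ω * u ω * v ω) + f ω * (v ω * v ω) := fun ω => by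
      rw [hw]; ring
    simp_rw [this]
    rw [integral_add (hfuu.fun_add (hfuv.const_mul 2)) hfvv, integral_add hfuu (hfuv.const_mul 2),
      integral_const_mul]
  rw [huw, hfuw, hww, hfww]
  linear_combination (1 / 2) * hfv

lemma integral_cubic_identity_of_finset_sum {ι : Type*} {s : Finset ι} {Y : ι → Ω → ℝ}
    (hf : MemLp f 3 μ) (hY : ∀ j, MemLp (Y j) 3 μ) (hv : MemLp v 3 μ)
    (hw : ∀ ω, w ω = ∑ j ∈ s, Y j ω + v ω)
    (hfv : ∫ ω, f ω * (v ω * v ω) ∂μ = (∫ ω, f ω ∂μ) * ∫ ω, v ω * v ω ∂μ) :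
    ∑ j ∈ s, ((∫ ω, f ω ∂μ) * (∫ ω, Y j ω * w ω ∂μ) - ∫ ω, f ω * Y j ω * w ω ∂μ)
      + ∑ j ∈ s, ∑ k ∈ s, ((1 / 2) * (∫ ω, f ω * Y j ω * Y k ω ∂μ)
        - (1 / 2) * (∫ ω, f ω ∂μ) * ∫ ω, Y j ω * Y k ω ∂μ)
      = -(1 / 2) * (∫ ω, f ω * w ω * w ω ∂μ) + (1 / 2) * (∫ ω, f ω ∂μ) * ∫ ω, w ω * w ω ∂μ := by
  have hu : MemLp (fun ω => ∑ j ∈ s, Y j ω) 3 μ := memLp_finsetSum s fun j _ => hY j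
  have hw3 : MemLp w 3 μ := by
    rw [show w = fun ω => ∑ j ∈ s, Y j ω + v ω from funext hw]; exact hu.add hv
  have huw : ∫ ω, (∑ j ∈ s, Y j ω) * w ω ∂μ = ∑ j ∈ s, ∫ ω, Y j ω * w ω ∂μ := by
    simp_rw [sum_mul]
    exact integral_finsetSum s fun j _ => (hY j).integrable_mul_of_three hw3
  have hfuw :
      ∫ ω, f ω * (∑ j ∈ s, Y j ω) * w ω ∂μ = ∑ j ∈ s, ∫ ω, f ω * Y j ω * w ω ∂μ := by
    simp_rw [mul_sum, sum_mul]
    exact integral_finsetSum s fun j _ => hf.integrable_mul_mul_of_three (hY j) hw3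
  have huu : ∫ ω, (∑ j ∈ s, Y j ω) * (∑ j ∈ s, Y j ω) ∂μ
      = ∑ j ∈ s, ∑ k ∈ s, ∫ ω, Y j ω * Y k ω ∂μ := by
    simp_rw [sum_mul_sum]
    exact integral_finset_sum_sum fun j _ k _ => (hY j).integrable_mul_of_three (hY k)
  have hfuu : ∫ ω, f ω * (∑ j ∈ s, Y j ω) * (∑ j ∈ s, Y j ω) ∂μ
      = ∑ j ∈ s, ∑ k ∈ s, ∫ ω, f ω * Y j ω * Y k ω ∂μ := by
    simp_rw [mul_sum _ _ (f _), sum_mul_sum]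
    exact integral_finset_sum_sum fun j _ k _ => hf.integrable_mul_mul_of_three (hY j) (hY k)
  have key := integral_cubic_identity_of_integral_mul_sq hf hu hv hw hfv
  rw [huw, hfuw, huu, hfuu] at key
  rw [← key]
  simp only [mul_sum, sum_sub_distrib]

end LocalDependence

theorem stmt_7_general {Ω : Type*} [MeasurableSpace Ω] (μ : Measure Ω) [IsProbabilityMeasure μ]
    {J : Type*} [Fintype J]
    (X : J → Ω → ℕ)
    (hX3 : ∀ i, MemLp (fun ω => (X i ω : ℝ)) 3 μ)
    (A : J → Finset J)
    (hLD1 : ∀ i, IndepFun (X i) (fun ω => fun j : {j : J // j ∉ A i} => X j.1 ω) μ)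
    (W : Ω → ℝ) (hW : W = fun ω => ∑ i : J, (X i ω : ℝ)) :
    ∑ i : J, ∑ j ∈ A i,
        ((∫ ω, (X i ω : ℝ) ∂μ) * (∫ ω, (X j ω : ℝ) * W ω ∂μ)
          - ∫ ω, (X i ω : ℝ) * (X j ω : ℝ) * W ω ∂μ)
      + ∑ i : J, ∑ j ∈ A i, ∑ k ∈ A i,
        ((1 / 2) * (∫ ω, (X i ω : ℝ) * (X j ω : ℝ) * (X k ω : ℝ) ∂μ)
          - (1 / 2) * (∫ ω, (X i ω : ℝ) ∂μ) * ∫ ω, (X j ω : ℝ) * (X k ω : ℝ) ∂μ)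
      = -(1 / 2) * (∫ ω, W ω ^ 3 ∂μ) + (1 / 2) * (∫ ω, W ω ∂μ) * ∫ ω, W ω ^ 2 ∂μ := by
  classical
  have hWω (ω : Ω) : W ω = ∑ i, (X i ω : ℝ) := congrFun hW ω
  have hsplit (i : J) (ω : Ω) :
      W ω = ∑ j ∈ A i, (X j ω : ℝ) + ∑ j : {j : J // j ∉ A i}, (X j ω : ℝ) := by
    rw [hWω, ← sum_add_sum_compl (A i), sum_subtype (A i)ᶜ fun j => mem_compl]
  have hlocal (i : J) := integral_cubic_identity_of_finset_sum (hX3 i) hX3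
    (memLp_finsetSum univ fun (j : {j : J // j ∉ A i}) _ => hX3 j) (hsplit i)
    ((hLD1 i).integral_mul_sum_sq_eq (hX3 i).1 fun j => (hX3 j).1)
  have hW1 : ∫ ω, W ω ∂μ = ∑ i, ∫ ω, (X i ω : ℝ) ∂μ := by
    rw [hW]; exact integral_finsetSum _ fun i _ => (hX3 i).integrable (by norm_num)
  have hW3 : ∫ ω, W ω ^ 3 ∂μ = ∑ i, ∫ ω, (X i ω : ℝ) * W ω * W ω ∂μ := by
    have hWLp : MemLp W 3 μ := hW ▸ memLp_finsetSum _ fun i _ => hX3 i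
    rw [← integral_finsetSum _ fun i _ => (hX3 i).integrable_mul_mul_of_three hWLp hWLp]
    congr 1 with ω
    rw [← sum_mul, ← sum_mul, ← hWω]; ring
  rw [← sum_add_distrib]
  refine (sum_congr rfl fun i _ => hlocal i).trans ?_
  simp only [hW1, hW3, sq, sum_add_distrib, mul_sum, sum_mul]

/-- Under local dependence (LD1), with `W = Σ_i X_i` having finite third moment,
`Σ_i Σ_{j∈A_i} (E[X_i]E[X_j W] − E[X_i X_j W])
 + Σ_i Σ_{j,k∈A_i} (½E[X_i X_j X_k] − ½E[X_i]E[X_j X_k])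
 = −½E[W³] + ½E[W]E[W²]`. -/
theorem stmt_7 {Ω : Type*} [MeasurableSpace Ω] (μ : Measure Ω) [IsProbabilityMeasure μ]
    {J : Type*} [Fintype J] [DecidableEq J]
    (X : J → Ω → ℕ) (hXm : ∀ i, Measurable (X i))
    (hX3 : ∀ i, MemLp (fun ω => (X i ω : ℝ)) 3 μ)
    (A : J → Finset J) (hA : ∀ i, i ∈ A i)
    (hLD1 : ∀ i, IndepFun (X i) (fun ω => fun j : {j : J // j ∉ A i} => X j.1 ω) μ)
    (W : Ω → ℝ) (hW : W = fun ω => ∑ i : J, (X i ω : ℝ)) :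
    ∑ i : J, ∑ j ∈ A i,
        ((∫ ω, (X i ω : ℝ) ∂μ) * (∫ ω, (X j ω : ℝ) * W ω ∂μ)
          - ∫ ω, (X i ω : ℝ) * (X j ω : ℝ) * W ω ∂μ)
      + ∑ i : J, ∑ j ∈ A i, ∑ k ∈ A i,
        ((1 / 2) * (∫ ω, (X i ω : ℝ) * (X j ω : ℝ) * (X k ω : ℝ) ∂μ)
          - (1 / 2) * (∫ ω, (X i ω : ℝ) ∂μ) * ∫ ω, (X j ω : ℝ) * (X k ω : ℝ) ∂μ)
      = -(1 / 2) * (∫ ω, W ω ^ 3 ∂μ) + (1 / 2) * (∫ ω, W ω ∂μ) * ∫ ω, W ω ^ 2 ∂μ :=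
  stmt_7_general μ X hX3 A hLD1 W hW
end
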